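/- Let a ∈ Δ_n^* and b ∈ Δ_m^* and let r ≥ 1. Then Π_{a,b}(r) is a nonempty compact subset of ℝ^{n×m}, and for every cost matrix C ∈ ℝ^{n×m} the infimum LOT_r := inf_{P ∈ Π_{a,b}(r)} ⟨C, P⟩ is attained at some P ∈ Π_{a,b}(r). -/

import Mathlib

open Matrix Finset Real
open scoped RealInnerProductSpace

noncomputable section

/-- Real matrices indexed by `Fin n × Fin m`. -/
abbrev Mat (n m : ℕ) : Type := Matrix (Fin n) (Fin m) ℝ

/-- Triples `(Q, R, g)` as in the low-rank OT factorization. -/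
abbrev LRTriple (n m r : ℕ) : Type := Mat n r × Mat m r × (Fin r → ℝ)

/-- Pairs `(Q, R)` (fixed middle marginal `g`). -/
abbrev LRPair (n m r : ℕ) : Type := Mat n r × Mat m r

/-- The interior of the probability simplex Δ_n^*: strictly positive entries summing to 1. -/
def posSimplex (n : ℕ) : Set (Fin n → ℝ) := {a | (∀ i, 0 < a i) ∧ ∑ i, a i = 1}

/-- Frobenius inner product ⟨C, P⟩ = Σ_{ij} C_ij P_ij. -/
def frobInner {n m : ℕ} (C P : Mat n m) : ℝ := ∑ i, ∑ j, C i j * P i j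

/-- Entropy H(P) = −Σ_{ij} P_ij (log P_ij − 1) (with 0 log 0 = 0, as `Real.log 0 = 0`). -/
def matH {n m : ℕ} (P : Mat n m) : ℝ := -∑ i, ∑ j, P i j * (Real.log (P i j) - 1)

/-- Entropy of a vector. -/
def vecH {r : ℕ} (g : Fin r → ℝ) : ℝ := -∑ i, g i * (Real.log (g i) - 1)

/-- Kullback–Leibler divergence KL(P,Q) = Σ_{ij} P_ij (log(P_ij/Q_ij) − 1). -/
def matKL {n m : ℕ} (P Q : Mat n m) : ℝ := ∑ i, ∑ j, P i j * (Real.log (P i j / Q i j) - 1)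

/-- Kullback–Leibler divergence of vectors. -/
def vecKL {r : ℕ} (p q : Fin r → ℝ) : ℝ := ∑ i, p i * (Real.log (p i / q i) - 1)

/-- KL divergence on triples, summing over the three components. -/
def tripleKL {n m r : ℕ} (x y : LRTriple n m r) : ℝ :=
  matKL x.1 y.1 + matKL x.2.1 y.2.1 + vecKL x.2.2 y.2.2

/-- KL divergence on pairs, summing over the two components. -/
def pairKL {n m r : ℕ} (x y : LRPair n m r) : ℝ := matKL x.1 y.1 + matKL x.2 y.2

/-- Euclidean inner product on triples. -/
def tripleInner {n m r : ℕ} (x y : LRTriple n m r) : ℝ :=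
  frobInner x.1 y.1 + frobInner x.2.1 y.2.1 + ∑ i, x.2.2 i * y.2.2 i

/-- Euclidean inner product on pairs. -/
def pairInner {n m r : ℕ} (x y : LRPair n m r) : ℝ := frobInner x.1 y.1 + frobInner x.2 y.2

/-- Squared Euclidean norm of a triple (Frobenius on matrix blocks). -/
def tripleNormSq {n m r : ℕ} (x : LRTriple n m r) : ℝ :=
  (∑ i, ∑ j, (x.1 i j) ^ 2) + (∑ i, ∑ j, (x.2.1 i j) ^ 2) + ∑ i, (x.2.2 i) ^ 2

/-- Squared Euclidean norm of a pair (Frobenius on matrix blocks). -/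
def pairNormSq {n m r : ℕ} (x : LRPair n m r) : ℝ :=
  (∑ i, ∑ j, (x.1 i j) ^ 2) + (∑ i, ∑ j, (x.2 i j) ^ 2)

/-- The transport polytope Π_{a,b} of couplings with marginals `a` and `b`. -/
def couplings {n m : ℕ} (a : Fin n → ℝ) (b : Fin m → ℝ) : Set (Mat n m) :=
  {P | (∀ i j, 0 ≤ P i j) ∧ (∀ i, ∑ j, P i j = a i) ∧ (∀ j, ∑ i, P i j = b j)}

/-- The nonnegative rank: smallest `q` such that `M` is a sum of `q` nonnegative
rank-one matrices. -/
def nonnegRank {n m : ℕ} (M : Mat n m) : ℕ :=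
  sInf {q : ℕ | ∃ f : Fin q → Mat n m,
    (∀ i, (f i).rank = 1 ∧ ∀ k l, 0 ≤ f i k l) ∧ M = ∑ i, f i}

/-- Π_{a,b}(r): couplings with nonnegative rank at most `r`. -/
def couplingsRank {n m : ℕ} (a : Fin n → ℝ) (b : Fin m → ℝ) (r : ℕ) : Set (Mat n m) :=
  {P | P ∈ couplings a b ∧ nonnegRank P ≤ r}

/-- 𝒞₁(a,b,r): `Q, R` nonnegative with row sums `a`, `b`, and `g > 0`. -/
def C1set {n m : ℕ} (a : Fin n → ℝ) (b : Fin m → ℝ) (r : ℕ) : Set (LRTriple n m r) :=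
  {x | (∀ i j, 0 ≤ x.1 i j) ∧ (∀ i j, 0 ≤ x.2.1 i j) ∧ (∀ i, 0 < x.2.2 i) ∧
    (∀ i, ∑ j, x.1 i j = a i) ∧ (∀ i, ∑ j, x.2.1 i j = b i)}

/-- The closure of 𝒞₁(a,b,r): as 𝒞₁ but only `g ≥ 0`. -/
def C1barSet {n m : ℕ} (a : Fin n → ℝ) (b : Fin m → ℝ) (r : ℕ) : Set (LRTriple n m r) :=
  {x | (∀ i j, 0 ≤ x.1 i j) ∧ (∀ i j, 0 ≤ x.2.1 i j) ∧ (∀ i, 0 ≤ x.2.2 i) ∧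
    (∀ i, ∑ j, x.1 i j = a i) ∧ (∀ i, ∑ j, x.2.1 i j = b i)}

/-- 𝒞₁(a,b,r,α): as 𝒞₁ but with the lower bound `g ≥ α`. -/
def C1setAlpha {n m : ℕ} (a : Fin n → ℝ) (b : Fin m → ℝ) (r : ℕ) (α : ℝ) :
    Set (LRTriple n m r) :=
  {x | (∀ i j, 0 ≤ x.1 i j) ∧ (∀ i j, 0 ≤ x.2.1 i j) ∧ (∀ i, α ≤ x.2.2 i) ∧
    (∀ i, ∑ j, x.1 i j = a i) ∧ (∀ i, ∑ j, x.2.1 i j = b i)}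

/-- 𝒞₂(r): `Q, R, g` nonnegative with both column sums equal to `g`. -/
def C2set {n m : ℕ} (r : ℕ) : Set (LRTriple n m r) :=
  {x | (∀ i j, 0 ≤ x.1 i j) ∧ (∀ i j, 0 ≤ x.2.1 i j) ∧ (∀ i, 0 ≤ x.2.2 i) ∧
    (∀ j, ∑ i, x.1 i j = x.2.2 j) ∧ (∀ j, ∑ i, x.2.1 i j = x.2.2 j)}

/-- 𝒞(a,b,r) = 𝒞₁(a,b,r) ∩ 𝒞₂(r). -/
def Cset {n m : ℕ} (a : Fin n → ℝ) (b : Fin m → ℝ) (r : ℕ) : Set (LRTriple n m r) :=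
  C1set a b r ∩ C2set r

/-- 𝒞(a,b,r,α) = 𝒞₁(a,b,r,α) ∩ 𝒞₂(r). -/
def CsetAlpha {n m : ℕ} (a : Fin n → ℝ) (b : Fin m → ℝ) (r : ℕ) (α : ℝ) :
    Set (LRTriple n m r) :=
  C1setAlpha a b r α ∩ C2set r

/-- F_ε(Q,R,g) = ⟨C, Q Diag(1/g) Rᵀ⟩ − ε H((Q,R,g)). -/
def Fobj {n m r : ℕ} (C : Mat n m) (ε : ℝ) (x : LRTriple n m r) : ℝ :=
  frobInner C (x.1 * Matrix.diagonal (fun i => (x.2.2 i)⁻¹) * x.2.1ᵀ) -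
    ε * (matH x.1 + matH x.2.1 + vecH x.2.2)

/-- LOT_{r,ε} = inf of F_ε over 𝒞(a,b,r). -/
def LOTre {n m : ℕ} (a : Fin n → ℝ) (b : Fin m → ℝ) (C : Mat n m) (ε : ℝ) (r : ℕ) : ℝ :=
  sInf (Fobj C ε '' Cset a b r)

/-- LOT_{r,ε,α} = inf of F_ε over 𝒞(a,b,r,α). -/
def LOTreAlpha {n m : ℕ} (a : Fin n → ℝ) (b : Fin m → ℝ) (C : Mat n m) (ε : ℝ) (r : ℕ)
    (α : ℝ) : ℝ :=
  sInf (Fobj C ε '' CsetAlpha a b r α)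

/-- Spectral norm (ℓ²→ℓ² operator norm) of a matrix. -/
def specNorm {n m : ℕ} (C : Mat n m) : ℝ :=
  ‖LinearMap.toContinuousLinearMap (Matrix.toEuclideanLin C)‖

/-- The gradient ∇F_ε(Q,R,g) =
(C R Diag(1/g) + ε log Q, Cᵀ Q Diag(1/g) + ε log R, −𝒟(Qᵀ C R)/g² + ε log g). -/
def gradF {n m r : ℕ} (C : Mat n m) (ε : ℝ) (x : LRTriple n m r) : LRTriple n m r :=
  (Matrix.of fun i k => (C * x.2.1) i k * (x.2.2 k)⁻¹ + ε * Real.log (x.1 i k),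
   Matrix.of fun j k => (Cᵀ * x.1) j k * (x.2.2 k)⁻¹ + ε * Real.log (x.2.1 j k),
   fun k => -((x.1ᵀ * C * x.2.1) k k) / (x.2.2 k) ^ 2 + ε * Real.log (x.2.2 k))

/-- Entrywise logarithm of a triple. -/
def logTriple {n m r : ℕ} (x : LRTriple n m r) : LRTriple n m r :=
  (Matrix.of fun i k => Real.log (x.1 i k), Matrix.of fun j k => Real.log (x.2.1 j k),
   fun k => Real.log (x.2.2 k))

/-- The feasible set Π_{a,g} × Π_{b,g}. -/
def pairFeasible {n m r : ℕ} (a : Fin n → ℝ) (b : Fin m → ℝ) (g : Fin r → ℝ) :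
    Set (LRPair n m r) :=
  {u | u.1 ∈ couplings a g ∧ u.2 ∈ couplings b g}

/-- f_ε(Q,R) = ⟨C, Q Diag(1/g) Rᵀ⟩ − ε (H(Q) + H(R)) for fixed `g`. -/
def fobj {n m r : ℕ} (C : Mat n m) (g : Fin r → ℝ) (ε : ℝ) (x : LRPair n m r) : ℝ :=
  frobInner C (x.1 * Matrix.diagonal (fun i => (g i)⁻¹) * x.2ᵀ) - ε * (matH x.1 + matH x.2)

/-- LOT_{r,g,ε} = inf of f_ε over Π_{a,g} × Π_{b,g}. -/
def LOTfix {n m r : ℕ} (a : Fin n → ℝ) (b : Fin m → ℝ) (g : Fin r → ℝ) (C : Mat n m)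
    (ε : ℝ) : ℝ :=
  sInf (fobj C g ε '' pairFeasible a b g)

/-- The gradient ∇f_ε(Q,R) = (C R Diag(1/g) + ε log Q, Cᵀ Q Diag(1/g) + ε log R). -/
def gradf {n m r : ℕ} (C : Mat n m) (g : Fin r → ℝ) (ε : ℝ) (x : LRPair n m r) :
    LRPair n m r :=
  (Matrix.of fun i k => (C * x.2) i k * (g k)⁻¹ + ε * Real.log (x.1 i k),
   Matrix.of fun j k => (Cᵀ * x.1) j k * (g k)⁻¹ + ε * Real.log (x.2 j k))

/-- Entrywise logarithm of a pair. -/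
def logPair {n m r : ℕ} (x : LRPair n m r) : LRPair n m r :=
  (Matrix.of fun i k => Real.log (x.1 i k), Matrix.of fun j k => Real.log (x.2 j k))

end

/-! A nonnegative matrix has nonnegative rank at most `r` iff it is `∑_{i<r} u_i v_iᵀ` with
`u_i, v_i ≥ 0`. Rescaling each pair to `(s_i⁻¹ u_i, s_i v_i)` with `s_i = ∑_k u_ik` keeps the
product, puts `u_i` in `[0, 1]ⁿ`, and for a coupling puts `v_i` in `[0, b]`, since `s_i v_il` is
the mass of column `l` of the `i`-th term. So `Π_{a,b}(r)` is the closed polytope `Π_{a,b}`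
intersected with the continuous image of a compact box. It contains `a bᵀ`, and the continuous
cost `⟨C, ·⟩` attains its minimum on it. -/

namespace Matrix

variable {K ι κ : Type*} [Field K] [Fintype κ] [DecidableEq κ]

theorem eq_zero_of_rank_eq_zero {A : Matrix ι κ K} (h : A.rank = 0) : A = 0 := by
  have hrange : LinearMap.range A.mulVecLin = ⊥ := Submodule.finrank_eq_zero.mp h
  ext k l
  have hcol : A *ᵥ Pi.single l 1 ∈ LinearMap.range A.mulVecLin := ⟨Pi.single l 1, rfl⟩
  rw [hrange, Submodule.mem_bot, mulVec_single_one] at hcol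
  exact congrFun hcol k

theorem rank_vecMulVec_eq_one {u : ι → K} {v : κ → K} (h : vecMulVec u v ≠ 0) :
    (vecMulVec u v).rank = 1 :=
  le_antisymm (rank_vecMulVec_le u v)
    (Nat.one_le_iff_ne_zero.2 fun h0 => h (eq_zero_of_rank_eq_zero h0))

theorem exists_eq_vecMulVec_of_rank_le_one {A : Matrix ι κ K} (h : A.rank ≤ 1) :
    ∃ (x : ι → K) (y : κ → K), A = vecMulVec x y := by
  obtain ⟨x, hx⟩ := finrank_le_one_iff.mp h
  choose y hy using fun l => hx ⟨A *ᵥ Pi.single l 1, Pi.single l 1, rfl⟩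
  refine ⟨x.1, y, ext fun k l => ?_⟩
  have hcol := congrFun (congrArg Subtype.val (hy l)) k
  simp only [SetLike.val_smul, Pi.smul_apply, smul_eq_mul, mulVec_single_one, col_apply] at hcol
  rw [vecMulVec_apply, ← hcol, mul_comm]

theorem exists_nonneg_eq_vecMulVec_of_rank_eq_one [LinearOrder K] [IsStrictOrderedRing K]
    {A : Matrix ι κ K} (h : A.rank = 1) (hA : ∀ k l, 0 ≤ A k l) :
    ∃ (u : ι → K) (v : κ → K), 0 ≤ u ∧ 0 ≤ v ∧ A = vecMulVec u v := by
  obtain ⟨x, y, rfl⟩ := exists_eq_vecMulVec_of_rank_le_one h.le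
  obtain ⟨p, q, hpq⟩ : ∃ p q, vecMulVec x y p q ≠ 0 := by
    by_contra! h0
    simp [show vecMulVec x y = 0 from ext h0] at h
  have hpos : 0 < vecMulVec x y p q := (hA p q).lt_of_ne' hpq
  refine ⟨fun k => vecMulVec x y k q / vecMulVec x y p q, fun l => vecMulVec x y p l,
    fun k => div_nonneg (hA k q) hpos.le, fun l => hA p l, ext fun k l => ?_⟩
  simp only [vecMulVec_apply] at hpq ⊢
  field_simp [left_ne_zero_of_mul hpq, right_ne_zero_of_mul hpq]

end Matrix

section

variable {n m : ℕ}

theorem exists_rankOne_sum_eq_sum_vecMulVec {ι : Type*} [Fintype ι] {u : ι → Fin n → ℝ}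
    {v : ι → Fin m → ℝ} (hu : 0 ≤ u) (hv : 0 ≤ v) :
    ∃ q ≤ Fintype.card ι, ∃ f : Fin q → Mat n m,
      (∀ i, (f i).rank = 1 ∧ ∀ k l, 0 ≤ f i k l) ∧ ∑ i, vecMulVec (u i) (v i) = ∑ i, f i := by
  classical
  set s := univ.filter fun i => vecMulVec (u i) (v i) ≠ 0
  let e := s.equivFin.symm
  refine ⟨s.card, card_filter_le _ _, fun j => vecMulVec (u (e j)) (v (e j)),
    fun j => ⟨rank_vecMulVec_eq_one (mem_filter.mp (e j).2).2,
      fun k l => mul_nonneg (hu _ k) (hv _ l)⟩, ?_⟩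
  calc ∑ i, vecMulVec (u i) (v i) = ∑ i ∈ s, vecMulVec (u i) (v i) :=
        (sum_filter_ne_zero _).symm
    _ = ∑ i : s, vecMulVec (u i) (v i) := (sum_coe_sort s _).symm
    _ = _ := (Equiv.sum_comp s.equivFin.symm _).symm

theorem nonnegRank_sum_vecMulVec_le {ι : Type*} [Fintype ι] {u : ι → Fin n → ℝ}
    {v : ι → Fin m → ℝ} (hu : 0 ≤ u) (hv : 0 ≤ v) :
    nonnegRank (∑ i, vecMulVec (u i) (v i)) ≤ Fintype.card ι := by
  obtain ⟨q, hq, f, hf, hsum⟩ := exists_rankOne_sum_eq_sum_vecMulVec hu hv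
  exact (Nat.sInf_le (by exact ⟨f, hf, hsum⟩)).trans hq

theorem sum_vecMulVec_single_one (M : Mat n m) :
    ∑ k, vecMulVec (Pi.single k 1) (M k) = M := by
  ext i j
  simp [Matrix.sum_apply, vecMulVec_apply, Pi.single_apply]

theorem exists_nonneg_sum_vecMulVec_eq_of_embedding {ι κ : Type*} [Fintype ι] [Fintype κ]
    (e : ι ↪ κ) {u : ι → Fin n → ℝ} {v : ι → Fin m → ℝ} (hu : 0 ≤ u) (hv : 0 ≤ v) :
    ∃ (u' : κ → Fin n → ℝ) (v' : κ → Fin m → ℝ), 0 ≤ u' ∧ 0 ≤ v' ∧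
      ∑ i, vecMulVec (u i) (v i) = ∑ j, vecMulVec (u' j) (v' j) := by
  have extend_nonneg : ∀ {α : Type} (w : ι → α → ℝ), 0 ≤ w → 0 ≤ Function.extend e w 0 := by
    intro α w hw j
    by_cases hj : ∃ i, e i = j
    · obtain ⟨i, rfl⟩ := hj
      rw [e.injective.extend_apply]
      exact hw i
    · rw [Function.extend_apply' _ _ _ hj]
  refine ⟨Function.extend e u 0, Function.extend e v 0, extend_nonneg u hu, extend_nonneg v hv,
    Fintype.sum_of_injective e e.injective _ _ (fun j hj => ?_) fun i => ?_⟩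
  · rw [Function.extend_apply' _ _ _ (by simpa using hj)]
    simp
  · simp only [e.injective.extend_apply]

theorem exists_rankOne_sum_eq_of_nonneg {M : Mat n m} (hM : ∀ k l, 0 ≤ M k l) :
    ∃ f : Fin (nonnegRank M) → Mat n m,
      (∀ i, (f i).rank = 1 ∧ ∀ k l, 0 ≤ f i k l) ∧ M = ∑ i, f i := by
  have hrows := exists_rankOne_sum_eq_sum_vecMulVec (u := fun k => Pi.single k 1) (v := M)
    (fun k => Pi.single_nonneg.2 zero_le_one : ∀ k, (0 : Fin n → ℝ) ≤ Pi.single k 1) hM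
  rw [sum_vecMulVec_single_one] at hrows
  obtain ⟨q, -, f, hf, hMf⟩ := hrows
  exact Nat.sInf_mem (s := {q | ∃ f : Fin q → Mat n m,
    (∀ i, (f i).rank = 1 ∧ ∀ k l, 0 ≤ f i k l) ∧ M = ∑ i, f i}) ⟨q, f, hf, hMf⟩

theorem nonnegRank_le_iff {M : Mat n m} (hM : ∀ k l, 0 ≤ M k l) {r : ℕ} :
    nonnegRank M ≤ r ↔ ∃ (u : Fin r → Fin n → ℝ) (v : Fin r → Fin m → ℝ),
      0 ≤ u ∧ 0 ≤ v ∧ M = ∑ i, vecMulVec (u i) (v i) := by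
  constructor
  · intro hr
    obtain ⟨f, hf, hMf⟩ := exists_rankOne_sum_eq_of_nonneg hM
    choose u v hu hv huv using fun i =>
      exists_nonneg_eq_vecMulVec_of_rank_eq_one (hf i).1 (hf i).2
    obtain ⟨u', v', hu', hv', hsum⟩ :=
      exists_nonneg_sum_vecMulVec_eq_of_embedding (Fin.castLEEmb hr) hu hv
    exact ⟨u', v', hu', hv', by rw [hMf, ← hsum]; exact sum_congr rfl fun i _ => huv i⟩
  · rintro ⟨u, v, hu, hv, rfl⟩
    simpa using nonnegRank_sum_vecMulVec_le hu hv

theorem nonnegRank_vecMulVec_le_one {u : Fin n → ℝ} {v : Fin m → ℝ} (hu : 0 ≤ u) (hv : 0 ≤ v) :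
    nonnegRank (vecMulVec u v) ≤ 1 := by
  simpa using nonnegRank_sum_vecMulVec_le (ι := Unit) (u := fun _ => u) (v := fun _ => v)
    (fun _ => hu) fun _ => hv

theorem vecMulVec_inv_sum_smul_sum_smul {u : Fin n → ℝ} (hu : 0 ≤ u) (v : Fin m → ℝ) :
    vecMulVec ((∑ k, u k)⁻¹ • u) ((∑ k, u k) • v) = vecMulVec u v := by
  ext k l
  simp only [vecMulVec_apply, Pi.smul_apply, smul_eq_mul]
  rcases (sum_nonneg fun k _ => hu k).eq_or_lt' with hs | hs
  · rw [(sum_eq_zero_iff_of_nonneg fun k _ => hu k).1 hs k (mem_univ k)]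
    simp
  · field_simp

theorem inv_sum_smul_le_one {u : Fin n → ℝ} (hu : 0 ≤ u) : (∑ k, u k)⁻¹ • u ≤ 1 :=
  fun k => by
    simpa [div_eq_inv_mul] using
      div_le_one_of_le₀ (single_le_sum (fun k _ => hu k) (mem_univ k)) (sum_nonneg fun k _ => hu k)

theorem isClosed_couplings (a : Fin n → ℝ) (b : Fin m → ℝ) :
    IsClosed (couplings a b) := by
  simp only [couplings, Set.ofPred_and, Set.ofPred_forall]
  refine .inter (isClosed_iInter fun i => isClosed_iInter fun j => isClosed_le ?_ ?_)
    (.inter (isClosed_iInter fun i => isClosed_eq ?_ ?_)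
      (isClosed_iInter fun j => isClosed_eq ?_ ?_)) <;>
  fun_prop

theorem continuous_frobInner (C : Mat n m) : Continuous (frobInner C) := by
  unfold frobInner
  fun_prop

theorem vecMulVec_mem_couplings {a : Fin n → ℝ} {b : Fin m → ℝ} (ha : 0 ≤ a) (hb : 0 ≤ b)
    (ha1 : ∑ i, a i = 1) (hb1 : ∑ j, b j = 1) : vecMulVec a b ∈ couplings a b :=
  ⟨fun i j => mul_nonneg (ha i) (hb j),
    fun i => by simp [vecMulVec_apply, ← mul_sum, hb1],
    fun j => by simp [vecMulVec_apply, ← sum_mul, ha1]⟩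

theorem continuous_sum_vecMulVec {r : ℕ} :
    Continuous fun w : (Fin r → Fin n → ℝ) × (Fin r → Fin m → ℝ) =>
      ∑ i, vecMulVec (w.1 i) (w.2 i) := by
  fun_prop

theorem couplingsRank_eq_inter_image (a : Fin n → ℝ) (b : Fin m → ℝ) (r : ℕ) :
    couplingsRank a b r = couplings a b ∩
      (fun w : (Fin r → Fin n → ℝ) × (Fin r → Fin m → ℝ) => ∑ i, vecMulVec (w.1 i) (w.2 i)) ''
        (Set.Icc 0 1 ×ˢ Set.Icc 0 fun _ => b) := by
  ext P
  constructor
  · rintro ⟨hP, hrank⟩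
    obtain ⟨u, v, hu, hv, rfl⟩ := (nonnegRank_le_iff hP.1).1 hrank
    set s := fun i => ∑ k, u i k
    have hsv : ∀ i, s i • v i ≤ b := fun i l => by
      rw [← hP.2.2 l]
      calc s i * v i l = ∑ k, vecMulVec (u i) (v i) k l := by simp [s, vecMulVec_apply, sum_mul]
        _ ≤ ∑ k, ∑ j, vecMulVec (u j) (v j) k l :=
          sum_le_sum fun k _ =>
            single_le_sum (fun j _ => mul_nonneg (hu j k) (hv j l)) (mem_univ i)
        _ = _ := by simp [Matrix.sum_apply]
    refine ⟨hP, ((fun i => (s i)⁻¹ • u i), fun i => s i • v i),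
      ⟨⟨fun i => smul_nonneg (inv_nonneg.2 (sum_nonneg fun k _ => hu i k)) (hu i),
        fun i => inv_sum_smul_le_one (hu i)⟩,
       ⟨fun i => smul_nonneg (sum_nonneg fun k _ => hu i k) (hv i), hsv⟩⟩, ?_⟩
    exact sum_congr rfl fun i _ => vecMulVec_inv_sum_smul_sum_smul (hu i) (v i)
  · rintro ⟨hP, w, ⟨⟨hu, -⟩, ⟨hv, -⟩⟩, rfl⟩
    exact ⟨hP, (nonnegRank_le_iff hP.1).2 ⟨w.1, w.2, hu, hv, rfl⟩⟩

end

/-- Π_{a,b}(r) is nonempty and compact, and for any cost matrix `C` the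
infimum of `⟨C, ·⟩` over Π_{a,b}(r) is attained. -/
theorem couplingsRank_compact_and_min_attained {n m : ℕ} (r : ℕ) (hr : 1 ≤ r)
    (a : Fin n → ℝ) (ha : a ∈ posSimplex n)
    (b : Fin m → ℝ) (hb : b ∈ posSimplex m) :
    (couplingsRank a b r).Nonempty ∧ IsCompact (couplingsRank a b r) ∧
      ∀ C : Mat n m, ∃ P ∈ couplingsRank a b r,
        ∀ P' ∈ couplingsRank a b r, frobInner C P ≤ frobInner C P' := by
  have hcompact : IsCompact (couplingsRank a b r) := by
    rw [couplingsRank_eq_inter_image]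
    exact ((isCompact_Icc.prod isCompact_Icc).image continuous_sum_vecMulVec).inter_left
      (isClosed_couplings a b)
  have ha0 : 0 ≤ a := fun i => (ha.1 i).le
  have hb0 : 0 ≤ b := fun j => (hb.1 j).le
  have hab : vecMulVec a b ∈ couplingsRank a b r :=
    ⟨vecMulVec_mem_couplings ha0 hb0 ha.2 hb.2, (nonnegRank_vecMulVec_le_one ha0 hb0).trans hr⟩
  refine ⟨⟨_, hab⟩, hcompact, fun C => ?_⟩
  obtain ⟨P, hP, hmin⟩ := hcompact.exists_isMinOn ⟨_, hab⟩ (continuous_frobInner C).continuousOn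
  exact ⟨P, hP, hmin⟩
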